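/- arXiv:1410.6493 — 2 statements merged into one kernel-verified Lean document; each statement's English description precedes it below -/
import Mathlib

section
/- For real q > 0 with q ≠ 1 and nonzero real numbers a, b, setting A(t) = (q − q^{−1})/(q^{−2t} − 1), one has −q^{b−a}·A(a) + [a−b]_q·A(a)·A(b) + q^{a−b}·A(b) = 0, where [t]_q = (q^t − q^{−t})/(q − q^{−1}). -/
/-!
With `x = q^a`, `y = q^b` and `d = q - q⁻¹` one has `A(a) = d x² / (1 - x²)` and
`[a - b]_q = (x/y - y/x) / d`, so the left-hand side equals
`d x y · (-(1 - y²) + (x² - y²) + (1 - x²)) / ((1 - x²)(1 - y²)) = 0`.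
-/

/-- Quantum number `[t]_q = (q^t - q^{-t})/(q - q⁻¹)` for real `q > 0`. -/
noncomputable def qnum (q t : ℝ) : ℝ := (q ^ t - q ^ (-t)) / (q - q⁻¹)

/-- The Cartan coefficient `A(t) = (q - q⁻¹)/(q^{-2t} - 1)`. -/
noncomputable def Acoef (q t : ℝ) : ℝ := (q - q⁻¹) / (q ^ (-(2 * t)) - 1)

theorem cartan_three_term_identity {K : Type*} [Field K] {x y : K} (d : K)
    (hx : 1 - x ^ 2 ≠ 0) (hy : 1 - y ^ 2 ≠ 0) :
    -(y / x) * (d * x ^ 2 / (1 - x ^ 2))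
      + (x / y - y / x) / d * (d * x ^ 2 / (1 - x ^ 2)) * (d * y ^ 2 / (1 - y ^ 2))
      + x / y * (d * y ^ 2 / (1 - y ^ 2)) = 0 := by
  field_simp
  ring

theorem Acoef_eq_div_one_sub_rpow_sq {q : ℝ} (hq : 0 < q) (t : ℝ) :
    Acoef q t = (q - q⁻¹) * (q ^ t) ^ 2 / (1 - (q ^ t) ^ 2) := by
  have hqt : q ^ t ≠ 0 := (Real.rpow_pos_of_pos hq t).ne'
  rw [Acoef, show -(2 * t) = -t * (2 : ℕ) by push_cast; ring, Real.rpow_mul_natCast hq.le,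
    Real.rpow_neg hq.le]
  field_simp

theorem qnum_sub_eq_div {q : ℝ} (hq : 0 < q) (a b : ℝ) :
    qnum q (a - b) = (q ^ a / q ^ b - q ^ b / q ^ a) / (q - q⁻¹) := by
  rw [qnum, neg_sub, Real.rpow_sub hq, Real.rpow_sub hq]

theorem one_sub_rpow_sq_ne_zero {q t : ℝ} (hq : 0 < q) (hq1 : q ≠ 1) (ht : t ≠ 0) :
    1 - (q ^ t) ^ 2 ≠ 0 := by
  rw [sub_ne_zero, ← Real.rpow_mul_natCast hq.le, ← Real.rpow_zero q, ne_eq,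
    Real.rpow_right_inj hq hq1]
  push_cast
  exact (mul_ne_zero ht two_ne_zero).symm

theorem three_chain_AA_lowering (q a b : ℝ) (hq : 0 < q) (hq1 : q ≠ 1)
    (ha : a ≠ 0) (hb : b ≠ 0) :
    -(q ^ (b - a)) * Acoef q a + qnum q (a - b) * Acoef q a * Acoef q b
      + q ^ (a - b) * Acoef q b = 0 := by
  rw [Acoef_eq_div_one_sub_rpow_sq hq, Acoef_eq_div_one_sub_rpow_sq hq, qnum_sub_eq_div hq,
    Real.rpow_sub hq, Real.rpow_sub hq]
  exact cartan_three_term_identity _ (one_sub_rpow_sq_ne_zero hq hq1 ha)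
    (one_sub_rpow_sq_ne_zero hq hq1 hb)
end

section
/- Fix n ≥ 2, N = 2n+1, and write i' = N+1−i. Let q be an invertible element of a commutative ring. In the N×N matrix algebra, let F_{n−1} = e_{n,n−1} + e_{(n−1)',(n−1)'−1} = e_{n,n−1} + e_{n+3,n+2} and F_n = e_{n+1,n} + e_{n',n'−1} = e_{n+1,n} + e_{n+2,n+1}. Then F_n³·F_{n−1} − (q + 1 + q^{−1})·F_n²·F_{n−1}·F_n + (q + 1 + q^{−1})·F_n·F_{n−1}·F_n² − F_{n−1}·F_n³ = 0. -/
/-!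
Write `F_n = x + y` and `F_{n-1} = u + v` with `x = e_{n+1,n}`, `y = e_{n+2,n+1}`,
`u = e_{n,n-1}`, `v = e_{n+3,n+2}`. A product `e_{ab} e_{cd}` of matrix units vanishes as soon as
`b ≠ c`, and these indices leave so few composable products that `F_n ^ 3`, `F_n ^ 2 F_{n-1} F_n`
and `F_n F_{n-1} F_n ^ 2` are all zero. Each of the four terms of the relation therefore vanishes
separately, whatever the coefficient `q + 1 + q⁻¹`.
-/

open Matrix

/-- The matrix unit `e_{ab}` in `N×N` matrices over a commutative ring `R`,
with 1-based indices `a, b`; zero if the indices are out of range. -/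
def matUnit (N : ℕ) (R : Type*) [CommRing R] [DecidableEq R] (a b : ℕ) :
    Matrix (Fin N) (Fin N) R :=
  if h : 1 ≤ a ∧ a ≤ N ∧ 1 ≤ b ∧ b ≤ N then
    Matrix.single ⟨a - 1, by omega⟩ ⟨b - 1, by omega⟩ 1
  else 0

theorem matUnit_mul_matUnit_of_ne {N : ℕ} {R : Type*} [CommRing R] [DecidableEq R]
    (a d : ℕ) {b c : ℕ} (hbc : b ≠ c) : matUnit N R a b * matUnit N R c d = 0 := by
  unfold matUnit
  split_ifs with hab hcd
  · refine single_mul_single_of_ne _ _ _ _ (fun h ↦ hbc ?_) _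
    have := Fin.mk.inj_iff.mp h
    omega
  all_goals simp

section PathRelations

variable {A : Type*} [Ring A] {x y u v : A}

theorem add_sq_eq_mul_of_mul_eq_zero (hxx : x * x = 0) (hxy : x * y = 0) (hyy : y * y = 0) :
    (x + y) ^ 2 = y * x := by
  simp only [sq, add_mul, mul_add, hxx, hxy, hyy, zero_add, add_zero]

theorem add_pow_three_eq_zero_of_mul_eq_zero (hxx : x * x = 0) (hxy : x * y = 0)
    (hyy : y * y = 0) : (x + y) ^ 3 = 0 := by
  rw [pow_succ, add_sq_eq_mul_of_mul_eq_zero hxx hxy hyy, mul_assoc, mul_add, hxx, hxy,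
    add_zero, mul_zero]

theorem add_sq_mul_add_mul_add_eq_zero (hxx : x * x = 0) (hxy : x * y = 0) (hyy : y * y = 0)
    (hux : u * x = 0) (huy : u * y = 0) (hxv : x * v = 0) :
    (x + y) ^ 2 * (u + v) * (x + y) = 0 := by
  have hxux : x * u * (x + y) = 0 := by rw [mul_assoc, mul_add, hux, huy, add_zero, mul_zero]
  rw [add_sq_eq_mul_of_mul_eq_zero hxx hxy hyy, mul_assoc y, mul_add x, hxv, add_zero,
    mul_assoc, hxux, mul_zero]

theorem add_mul_add_mul_add_sq_eq_zero (hxx : x * x = 0) (hxy : x * y = 0) (hyy : y * y = 0)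
    (huy : u * y = 0) (hxv : x * v = 0) (hyv : y * v = 0) :
    (x + y) * (u + v) * (x + y) ^ 2 = 0 := by
  have hvyx : (x + y) * (v * y * x) = 0 := by
    rw [← mul_assoc, ← mul_assoc, add_mul, hxv, hyv, add_zero, zero_mul, zero_mul]
  rw [add_sq_eq_mul_of_mul_eq_zero hxx hxy hyy, ← mul_assoc, mul_assoc _ (u + v), add_mul u,
    huy, zero_add, mul_assoc, mul_assoc, ← mul_assoc v, hvyx]

end PathRelations

theorem modified_qSerre_natural_rep_general (n : ℕ)
    (R : Type*) [CommRing R] [DecidableEq R]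
    (N : ℕ)
    (q : Rˣ)
    (Fnm1 Fn : Matrix (Fin N) (Fin N) R)
    (hFnm1 : Fnm1 = matUnit N R n (n - 1) + matUnit N R (n + 3) (n + 2))
    (hFn : Fn = matUnit N R (n + 1) n + matUnit N R (n + 2) (n + 1)) :
    Fn ^ 3 * Fnm1 - ((q : R) + 1 + ((q⁻¹ : Rˣ) : R)) • (Fn ^ 2 * Fnm1 * Fn)
      + ((q : R) + 1 + ((q⁻¹ : Rˣ) : R)) • (Fn * Fnm1 * Fn ^ 2)
      - Fnm1 * Fn ^ 3 = 0 := by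
  subst hFnm1 hFn
  have hunit (a b c d : ℕ) (hbc : b ≠ c) : matUnit N R a b * matUnit N R c d = 0 :=
    matUnit_mul_matUnit_of_ne a d hbc
  have hxx := hunit (n + 1) n (n + 1) n (by omega)
  have hxy := hunit (n + 1) n (n + 2) (n + 1) (by omega)
  have hyy := hunit (n + 2) (n + 1) (n + 2) (n + 1) (by omega)
  have hux := hunit n (n - 1) (n + 1) n (by omega)
  have huy := hunit n (n - 1) (n + 2) (n + 1) (by omega)
  have hxv := hunit (n + 1) n (n + 3) (n + 2) (by omega)
  have hyv := hunit (n + 2) (n + 1) (n + 3) (n + 2) (by omega)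
  rw [add_pow_three_eq_zero_of_mul_eq_zero hxx hxy hyy,
    add_sq_mul_add_mul_add_eq_zero hxx hxy hyy hux huy hxv,
    add_mul_add_mul_add_sq_eq_zero hxx hxy hyy huy hxv hyv]
  simp

theorem modified_qSerre_natural_rep (n : ℕ) (hn : 2 ≤ n)
    (R : Type*) [CommRing R] [DecidableEq R]
    (N : ℕ) (hN : N = 2 * n + 1)
    (q : Rˣ)
    (Fnm1 Fn : Matrix (Fin N) (Fin N) R)
    (hFnm1 : Fnm1 = matUnit N R n (n - 1) + matUnit N R (n + 3) (n + 2))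
    (hFn : Fn = matUnit N R (n + 1) n + matUnit N R (n + 2) (n + 1)) :
    Fn ^ 3 * Fnm1 - ((q : R) + 1 + ((q⁻¹ : Rˣ) : R)) • (Fn ^ 2 * Fnm1 * Fn)
      + ((q : R) + 1 + ((q⁻¹ : Rˣ) : R)) • (Fn * Fnm1 * Fn ^ 2)
      - Fnm1 * Fn ^ 3 = 0 :=
  modified_qSerre_natural_rep_general n R N q Fnm1 Fn hFnm1 hFn
end
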